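/- arXiv:1712.05707 — 3 statements merged into one kernel-verified Lean document; each statement's English description precedes it below -/
import Mathlib

section
/- For n ≥ 2 and (s₁,…,s_{n-1},p) ∈ ℂⁿ, the point (s₁,…,s_{n-1},p) belongs to 𝔾ₙ if and only if |p| < 1 and there exists (c₁,…,c_{n-1}) ∈ 𝔾_{n-1} such that sᵢ = cᵢ + conj(c_{n-i})·p for every i = 1,…,n-1. -/
/-!
Write `P_z(t) = ∏ (t - zᵢ)` and `P_z^*(t) = ∏ (1 - z̄ᵢ t)`. For `s = π(z)` and `c = π(w)`, the
relation `sᵢ = cᵢ + c̄_{n-i} p` says that `P_z(t) = t P_w(t) ± p P_w^*(t)`, and then also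
`P_z^*(t) = P_w^*(t) ± p̄ t P_w(t)`. If all roots of `P` lie in `𝔻` and `|t| ≥ 1`, then
`|P^*(t)| ≤ |P(t)| ≠ 0`. Hence a root `t` of `P_w` outside `𝔻` would give
`|P_z(t)| = |p| |P_z^*(t)| ≤ |p| |P_z(t)|`, and a root `t` of `P_z` outside `𝔻` would give
`|t| |P_w(t)| = |p| |P_w^*(t)| ≤ |p| |P_w(t)|`; both are impossible when `|p| < 1`.
Given `s` with `|p| < 1`, the relation is solved by `cᵢ = (sᵢ - s̄_{n-i} p) / (1 - |p|²)`;
`w` and `z` exist because every point of `ℂⁿ` is a symmetrization (ℂ is algebraically closed).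
-/

open Finset

/-- The `k`-th elementary symmetric polynomial of `z₁, …, zₙ`. -/
noncomputable def esymC (n k : ℕ) (z : Fin n → ℂ) : ℂ :=
  ∑ t ∈ Finset.powersetCard k (Finset.univ : Finset (Fin n)), ∏ j ∈ t, z j

/-- The symmetrization map `πₙ(z) = (e₁(z), …, eₙ(z))`. -/
noncomputable def symMap (n : ℕ) (z : Fin n → ℂ) : Fin n → ℂ :=
  fun k => esymC n (k.1 + 1) z

/-- The open symmetrized polydisc `𝔾ₙ`. -/
noncomputable def openSymPolydisc (n : ℕ) : Set (Fin n → ℂ) :=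
  {x | ∃ z : Fin n → ℂ, (∀ j, ‖z j‖ < 1) ∧ symMap n z = x}

open ComplexConjugate

section Vieta

variable {n : ℕ}

lemma esymC_eq_esymm (k : ℕ) (z : Fin n → ℂ) : esymC n k z = (univ.val.map z).esymm k := by
  rw [esymC, Finset.esymm_map_val]

lemma esymC_zero (z : Fin n → ℂ) : esymC n 0 z = 1 := by
  simp [esymC]

lemma esymC_of_lt {k : ℕ} (h : n < k) (z : Fin n → ℂ) : esymC n k z = 0 := by
  rw [esymC, powersetCard_eq_empty.mpr (by rwa [card_univ, Fintype.card_fin]), sum_empty]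

lemma esymC_self (z : Fin n → ℂ) : esymC n n z = ∏ j, z j := by
  simpa [esymC] using congrArg (∑ t ∈ ·, ∏ j ∈ t, z j) (powersetCard_self (univ : Finset (Fin n)))

lemma esymC_mul_left (a : ℂ) (k : ℕ) (z : Fin n → ℂ) :
    esymC n k (fun j => a * z j) = a ^ k * esymC n k z := by
  rw [esymC, esymC, mul_sum]
  refine sum_congr rfl fun s hs => ?_
  rw [prod_mul_distrib, prod_const, (mem_powersetCard.mp hs).2]

lemma esymC_conj (k : ℕ) (z : Fin n → ℂ) :
    esymC n k (fun j => conj (z j)) = conj (esymC n k z) := by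
  simp only [esymC, map_sum, map_prod]

open Polynomial in
lemma prod_add_eq_sum_esymC (z : Fin n → ℂ) (t : ℂ) :
    ∏ j, (t + z j) = ∑ k ∈ range (n + 1), esymC n k z * t ^ (n - k) := by
  have := congrArg (eval t) (Multiset.prod_X_add_C_eq_sum_esymm (univ.val.map z))
  simp only [Multiset.map_map, Function.comp_def, eval_multiset_prod, eval_add, eval_X, eval_C,
    eval_finsetSum, eval_mul, eval_pow, Multiset.card_map, card_val, card_univ,
    Fintype.card_fin] at this
  simpa only [prod_eq_multiset_prod, esymC_eq_esymm] using this

lemma prod_sub_eq_sum_esymC (z : Fin n → ℂ) (t : ℂ) :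
    ∏ j, (t - z j) = ∑ k ∈ range (n + 1), (-1) ^ k * esymC n k z * t ^ (n - k) := by
  simp_rw [sub_eq_add_neg, neg_eq_neg_one_mul (z _), prod_add_eq_sum_esymC, esymC_mul_left]

lemma prod_one_sub_conj_mul_eq_sum_esymC (z : Fin n → ℂ) (t : ℂ) :
    ∏ j, (1 - conj (z j) * t) = ∑ k ∈ range (n + 1), (-1) ^ k * conj (esymC n k z) * t ^ k := by
  have h (j : Fin n) : 1 - conj (z j) * t = 1 + -t * conj (z j) := by ring
  simp_rw [h, prod_add_eq_sum_esymC, esymC_mul_left, esymC_conj, one_pow, mul_one, neg_pow t]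
  exact sum_congr rfl fun _ _ => by ring

open Polynomial in
lemma exists_multiset_esymm_eq {K : Type*} [Field K] [IsAlgClosed K] (a : Fin n → K) :
    ∃ s : Multiset K, Multiset.card s = n ∧ ∀ j : Fin n, s.esymm (j + 1) = a j := by
  -- `P = Xⁿ - a₁ Xⁿ⁻¹ + a₂ Xⁿ⁻² - ⋯ ± aₙ`
  set P : K[X] := X ^ n + ∑ i : Fin n, C ((-1) ^ (n - i) * a i.rev) * X ^ (i : ℕ)
  have hmonic : P.Monic := monic_X_pow_add (degree_sum_fin_lt _)
  have hdeg : P.natDegree = n := by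
    rw [natDegree_add_eq_left_of_degree_lt (by rw [degree_X_pow]; exact degree_sum_fin_lt _),
      natDegree_X_pow]
  have hroots : Multiset.card P.roots = P.natDegree :=
    splits_iff_card_roots.mp (IsAlgClosed.splits P)
  refine ⟨P.roots, hroots.trans hdeg, fun j => ?_⟩
  have hj : n - j.rev = j + 1 := by rw [Fin.val_rev]; omega
  have hvieta := coeff_eq_esymm_roots_of_card hroots (k := j.rev) (by omega)
  rw [hmonic.leadingCoeff, hdeg, hj, one_mul] at hvieta
  have hcoeff : P.coeff j.rev = (-1) ^ (j.1 + 1) * a j := by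
    rw [coeff_add, coeff_X_pow, if_neg (by omega), zero_add, finsetSum_coeff,
      sum_eq_single j.rev (fun i _ hi => by rw [coeff_C_mul_X_pow, if_neg (by grind)]) (by simp),
      coeff_C_mul_X_pow, if_pos rfl, Fin.rev_rev, hj]
  exact mul_left_cancel₀ (pow_ne_zero _ (neg_ne_zero.mpr one_ne_zero)) (hvieta.symm.trans hcoeff)

lemma symMap_surjective : Function.Surjective (symMap n) := by
  intro a
  obtain ⟨s, hs, hesymm⟩ := exists_multiset_esymm_eq a
  obtain rfl : s.toList.length = n := by rw [Multiset.length_toList, hs]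
  refine ⟨s.toList.get, funext fun j => ?_⟩
  rw [symMap, esymC_eq_esymm, Fin.univ_val_map, List.ofFn_get, Multiset.coe_toList, hesymm]

end Vieta

lemma norm_one_sub_conj_mul_le_norm_sub {t w : ℂ} (ht : 1 ≤ ‖t‖) (hw : ‖w‖ ≤ 1) :
    ‖1 - conj w * t‖ ≤ ‖t - w‖ := by
  have key : ‖t - w‖ ^ 2 - ‖1 - conj w * t‖ ^ 2 = (‖t‖ ^ 2 - 1) * (1 - ‖w‖ ^ 2) := by
    simp only [Complex.sq_norm, Complex.normSq_apply, Complex.sub_re, Complex.sub_im,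
      Complex.mul_re, Complex.mul_im, Complex.conj_re, Complex.conj_im, Complex.one_re,
      Complex.one_im]
    ring
  have hprod : 0 ≤ (‖t‖ ^ 2 - 1) * (1 - ‖w‖ ^ 2) :=
    mul_nonneg (by nlinarith) (by nlinarith [norm_nonneg w])
  exact (sq_le_sq₀ (norm_nonneg _) (norm_nonneg _)).mp (by linarith)

section UnitDisc

variable {n : ℕ} {w : Fin n → ℂ} {t : ℂ}

lemma prod_sub_ne_zero_of_norm_lt_one (hw : ∀ j, ‖w j‖ < 1) (ht : 1 ≤ ‖t‖) :
    ∏ j, (t - w j) ≠ 0 :=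
  prod_ne_zero_iff.mpr fun j _ => sub_ne_zero.mpr fun h => by linarith [h ▸ hw j]

lemma norm_prod_one_sub_conj_mul_le (hw : ∀ j, ‖w j‖ < 1) (ht : 1 ≤ ‖t‖) :
    ‖∏ j, (1 - conj (w j) * t)‖ ≤ ‖∏ j, (t - w j)‖ := by
  simp only [norm_prod]
  exact prod_le_prod (fun _ _ => norm_nonneg _)
    fun j _ => norm_one_sub_conj_mul_le_norm_sub ht (hw j).le

lemma norm_prod_lt_one {z : Fin (n + 1) → ℂ} (hz : ∀ j, ‖z j‖ < 1) : ‖∏ j, z j‖ < 1 := by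
  rw [norm_prod, Fin.prod_univ_succ]
  exact mul_lt_one_of_nonneg_of_lt_one_left (norm_nonneg _) (hz 0)
    (prod_le_one (fun _ _ => norm_nonneg _) fun j _ => (hz _).le)

end UnitDisc

lemma div_add_conj_div_mul_eq {p : ℂ} (hp : ‖p‖ ≠ 1) (u v : ℂ) :
    (u - conj v * p) / (1 - conj p * p) + conj ((v - conj u * p) / (1 - conj p * p)) * p = u := by
  have hD : 1 - conj p * p = ((1 - ‖p‖ ^ 2 : ℝ) : ℂ) := by
    rw [mul_comm, Complex.mul_conj, Complex.normSq_eq_norm_sq]; push_cast; ring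
  have hD0 : (1 - ‖p‖ ^ 2 : ℝ) ≠ 0 := by
    intro h0; apply hp; nlinarith [norm_nonneg p]
  rw [hD, map_div₀, Complex.conj_ofReal, map_sub, map_mul, Complex.conj_conj, div_mul_eq_mul_div,
    ← add_div, div_eq_iff (Complex.ofReal_ne_zero.mpr hD0), ← hD]
  ring

lemma sum_range_neg_one_pow_mul_reflect {R : Type*} [CommRing R] (N : ℕ) (f : ℕ → R) :
    ∑ k ∈ range (N + 1), (-1) ^ k * f (N - k) = (-1) ^ N * ∑ k ∈ range (N + 1), (-1) ^ k * f k := by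
  rw [← sum_range_reflect, mul_sum]
  refine sum_congr rfl fun k hk => ?_
  obtain ⟨j, rfl⟩ := Nat.exists_eq_add_of_le (Nat.lt_succ_iff.mp (mem_range.mp hk))
  rw [show k + j + 1 - 1 - k = j by omega, show k + j - j = k by omega, pow_add, mul_comm _ (f k),
    mul_mul_mul_comm, ← mul_pow, neg_one_mul, neg_neg, one_pow, one_mul, mul_comm]

/-- For `x = πₙ(z)` and `c = π_{n-1}(w)` this is the relation `sᵢ = cᵢ + conj(c_{n-i}) p` of the
theorem, extended by `e₀ = 1` and `e_n(w) = 0` to `k = 0` (trivially) and `k = n` (`p = e_n(z)`). -/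
def SchurRel (m : ℕ) (z : Fin (m + 1) → ℂ) (w : Fin m → ℂ) (p : ℂ) : Prop :=
  ∀ k ≤ m + 1, esymC (m + 1) k z = esymC m k w + conj (esymC m (m + 1 - k) w) * p

section SchurRel

variable {m : ℕ} {z : Fin (m + 1) → ℂ} {w : Fin m → ℂ} {p : ℂ}

lemma schurRel_iff : SchurRel m z w p ↔ symMap (m + 1) z (Fin.last m) = p ∧
    ∀ i : Fin m, symMap (m + 1) z i.castSucc = symMap m w i + conj (symMap m w i.rev) * p := by
  constructor
  · intro h
    refine ⟨?_, fun i => ?_⟩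
    · simpa [symMap, esymC_of_lt, esymC_zero] using h (m + 1) le_rfl
    · simpa [symMap, show m - (i + 1) + 1 = m - i by omega] using h (i + 1) (by omega)
  · rintro ⟨hlast, hcast⟩ (_ | k) hk
    · simp [esymC_zero, esymC_of_lt]
    · rcases (Nat.lt_succ_iff.mp hk).lt_or_eq with hk | rfl
      · simpa [symMap, show m - (k + 1) + 1 = m - k by omega] using hcast ⟨k, hk⟩
      · simpa [symMap, esymC_of_lt, esymC_zero] using hlast

theorem SchurRel.prod_sub_eq (h : SchurRel m z w p) (t : ℂ) :
    ∏ i, (t - z i) = t * ∏ i, (t - w i) + (-1) ^ (m + 1) * p * ∏ i, (1 - conj (w i) * t) := by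
  have hshift : ∑ k ∈ range (m + 2), (-1) ^ k * esymC m k w * t ^ (m + 1 - k)
      = t * ∑ k ∈ range (m + 1), (-1) ^ k * esymC m k w * t ^ (m - k) := by
    rw [sum_range_succ, esymC_of_lt m.lt_succ_self, mul_zero, zero_mul, add_zero, mul_sum]
    refine sum_congr rfl fun k hk => ?_
    rw [show m + 1 - k = m - k + 1 by grind, pow_succ]
    ring
  have hreflect : ∑ k ∈ range (m + 2), (-1) ^ k * (conj (esymC m (m + 1 - k) w) * t ^ (m + 1 - k))
      = (-1) ^ (m + 1) * ∑ k ∈ range (m + 1), (-1) ^ k * conj (esymC m k w) * t ^ k := by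
    rw [sum_range_neg_one_pow_mul_reflect (m + 1) (fun j => conj (esymC m j w) * t ^ j),
      sum_range_succ, esymC_of_lt m.lt_succ_self, map_zero, zero_mul, mul_zero, add_zero]
    simp only [mul_assoc]
  have hsplit (k : ℕ) (a b c : ℂ) :
      (-1) ^ k * (a + b * p) * c = (-1) ^ k * a * c + p * ((-1) ^ k * (b * c)) := by
    ring
  rw [prod_sub_eq_sum_esymC, prod_sub_eq_sum_esymC, prod_one_sub_conj_mul_eq_sum_esymC,
    sum_congr rfl fun k hk => by rw [h k (Nat.lt_succ_iff.mp (mem_range.mp hk)), hsplit],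
    sum_add_distrib, ← mul_sum, hshift, hreflect]
  ring

theorem SchurRel.prod_one_sub_conj_mul_eq (h : SchurRel m z w p) (t : ℂ) :
    ∏ i, (1 - conj (z i) * t)
      = ∏ i, (1 - conj (w i) * t) + (-1) ^ (m + 1) * conj p * (t * ∏ i, (t - w i)) := by
  have hshift : ∑ k ∈ range (m + 2), (-1) ^ k * conj (esymC m k w) * t ^ k
      = ∑ k ∈ range (m + 1), (-1) ^ k * conj (esymC m k w) * t ^ k := by
    rw [sum_range_succ, esymC_of_lt m.lt_succ_self, map_zero, mul_zero, zero_mul, add_zero]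
  have hreflect : ∑ k ∈ range (m + 2), (-1) ^ k * (esymC m (m + 1 - k) w * t ^ k)
      = (-1) ^ (m + 1) * (t * ∑ k ∈ range (m + 1), (-1) ^ k * esymC m k w * t ^ (m - k)) := by
    rw [sum_congr rfl fun k hk => by
        rw [show t ^ k = t ^ (m + 1 - (m + 1 - k)) by
          rw [Nat.sub_sub_self (Nat.lt_succ_iff.mp (mem_range.mp hk))]],
      sum_range_neg_one_pow_mul_reflect (m + 1) (fun j => esymC m j w * t ^ (m + 1 - j)),
      sum_range_succ, esymC_of_lt m.lt_succ_self, zero_mul, mul_zero, add_zero, mul_sum _ _ t]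
    refine congrArg _ (sum_congr rfl fun k hk => ?_)
    rw [show m + 1 - k = m - k + 1 by grind, pow_succ]
    ring
  have hsplit (k : ℕ) (a b c : ℂ) :
      (-1) ^ k * conj (a + conj b * p) * c
        = (-1) ^ k * conj a * c + conj p * ((-1) ^ k * (b * c)) := by
    rw [map_add, map_mul, Complex.conj_conj]
    ring
  rw [prod_one_sub_conj_mul_eq_sum_esymC, prod_one_sub_conj_mul_eq_sum_esymC,
    prod_sub_eq_sum_esymC,
    sum_congr rfl fun k hk => by rw [h k (Nat.lt_succ_iff.mp (mem_range.mp hk)), hsplit],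
    sum_add_distrib, ← mul_sum, hshift, hreflect]
  ring

theorem SchurRel.norm_lt_one_right (h : SchurRel m z w p) (hz : ∀ j, ‖z j‖ < 1) (hp : ‖p‖ < 1)
    (j : Fin m) : ‖w j‖ < 1 := by
  by_contra! ht
  set t := w j
  have hroot : ∏ i, (t - w i) = 0 := prod_eq_zero (mem_univ j) (sub_self _)
  have hPz : ∏ i, (t - z i) = (-1) ^ (m + 1) * p * ∏ i, (1 - conj (z i) * t) := by
    have h₁ := h.prod_sub_eq t
    have h₂ := h.prod_one_sub_conj_mul_eq t
    rw [hroot, mul_zero, zero_add] at h₁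
    rw [hroot, mul_zero, mul_zero, add_zero] at h₂
    rw [h₁, h₂]
  have hpos : 0 < ‖∏ i, (t - z i)‖ := norm_pos_iff.mpr (prod_sub_ne_zero_of_norm_lt_one hz ht)
  refine lt_irrefl ‖∏ i, (t - z i)‖ ?_
  calc ‖∏ i, (t - z i)‖ = ‖p‖ * ‖∏ i, (1 - conj (z i) * t)‖ := by rw [hPz]; simp
    _ ≤ ‖p‖ * ‖∏ i, (t - z i)‖ := by gcongr; exact norm_prod_one_sub_conj_mul_le hz ht
    _ < ‖∏ i, (t - z i)‖ := mul_lt_of_lt_one_left hpos hp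

theorem SchurRel.norm_lt_one_left (h : SchurRel m z w p) (hw : ∀ j, ‖w j‖ < 1) (hp : ‖p‖ < 1)
    (j : Fin (m + 1)) : ‖z j‖ < 1 := by
  by_contra! ht
  set t := z j
  have hroot : ∏ i, (t - z i) = 0 := prod_eq_zero (mem_univ j) (sub_self _)
  have hPw : t * ∏ i, (t - w i) = -((-1) ^ (m + 1) * p * ∏ i, (1 - conj (w i) * t)) := by
    rw [← add_eq_zero_iff_eq_neg, ← h.prod_sub_eq, hroot]
  have hpos : 0 < ‖∏ i, (t - w i)‖ := norm_pos_iff.mpr (prod_sub_ne_zero_of_norm_lt_one hw ht)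
  refine lt_irrefl ‖∏ i, (t - w i)‖ ?_
  calc ‖∏ i, (t - w i)‖ ≤ ‖t‖ * ‖∏ i, (t - w i)‖ := le_mul_of_one_le_left hpos.le ht
    _ = ‖p‖ * ‖∏ i, (1 - conj (w i) * t)‖ := by rw [← norm_mul, hPw]; simp
    _ ≤ ‖p‖ * ‖∏ i, (t - w i)‖ := by gcongr; exact norm_prod_one_sub_conj_mul_le hw ht
    _ < ‖∏ i, (t - w i)‖ := mul_lt_of_lt_one_left hpos hp

end SchurRel

/-- Here `n = m + 1`, `x i.castSucc = s_{i+1}`, `x (Fin.last m) = p`, and `c i.rev = c_{n-i}`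
when `c i = c_{i+1}`. -/
theorem mem_openSymPolydisc_iff_exists_rep_general (m : ℕ)
    (x : Fin (m + 1) → ℂ) :
    x ∈ openSymPolydisc (m + 1) ↔
      ‖x (Fin.last m)‖ < 1 ∧
        ∃ c : Fin m → ℂ, c ∈ openSymPolydisc m ∧
          ∀ i : Fin m,
            x i.castSucc = c i + (starRingEnd ℂ) (c i.rev) * x (Fin.last m) := by
  constructor
  · rintro ⟨z, hz, rfl⟩
    set p := symMap (m + 1) z (Fin.last m)
    have hp : ‖p‖ < 1 := by simpa [p, symMap, esymC_self] using norm_prod_lt_one hz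
    obtain ⟨w, hw⟩ := symMap_surjective fun i : Fin m =>
      (symMap (m + 1) z i.castSucc - conj (symMap (m + 1) z i.rev.castSucc) * p) / (1 - conj p * p)
    have hrel (i : Fin m) :
        symMap (m + 1) z i.castSucc = symMap m w i + conj (symMap m w i.rev) * p := by
      simp only [hw, Fin.rev_rev, div_add_conj_div_mul_eq hp.ne]
    exact ⟨hp, symMap m w, ⟨w, (schurRel_iff.mpr ⟨rfl, hrel⟩).norm_lt_one_right hz hp, rfl⟩, hrel⟩
  · rintro ⟨hp, _, ⟨w, hw, rfl⟩, hrel⟩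
    obtain ⟨z, rfl⟩ := symMap_surjective x
    exact ⟨z, (schurRel_iff.mpr ⟨rfl, hrel⟩).norm_lt_one_left hw hp, rfl⟩

/-- Costara's characterization: for `n = m + 1 ≥ 2`, a point
`(s₁, …, s_{n-1}, p)` (here `x i.castSucc = s_{i+1}` for `i : Fin m` and
`x (Fin.last m) = p`) lies in `𝔾ₙ` iff `|p| < 1` and there is
`(c₁, …, c_{n-1}) ∈ 𝔾_{n-1}` with `sᵢ = cᵢ + conj(c_{n-i}) p` for all
`i = 1, …, n-1` (note `c i.rev = c_{n-i}` when `c i = c_{i+1}`). -/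
theorem mem_openSymPolydisc_iff_exists_rep (m : ℕ) (hm : 1 ≤ m)
    (x : Fin (m + 1) → ℂ) :
    x ∈ openSymPolydisc (m + 1) ↔
      ‖x (Fin.last m)‖ < 1 ∧
        ∃ c : Fin m → ℂ, c ∈ openSymPolydisc m ∧
          ∀ i : Fin m,
            x i.castSucc = c i + (starRingEnd ℂ) (c i.rev) * x (Fin.last m) :=
  mem_openSymPolydisc_iff_exists_rep_general m x
end

section
/- Let a₀, a₁, a₃ be nonnegative real numbers with a₀ ≤ a₁. Then the operator norm of the 2×2 matrix [[a₀, 0], [a₃, a₀ + a₁/4]] is at most the operator norm of the 2×2 matrix [[a₀, 0], [a₁ + a₃, a₀]]. -/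
/-!
For `b ≥ 0` the matrix `[[a, 0], [b, a]]` has operator norm `b / 2 + √(a² + b² / 4)`: the upper
bound is Cauchy–Schwarz after expanding `‖T x‖²`, and `(p, a)` with `p` that value attains it.
Splitting off `diag(0, a₁ / 4)`, whose norm is `a₁ / 4`, the left-hand side is at most
`a₃ / 2 + √(a₀² + a₃² / 4) + a₁ / 4`, and this is below the exact value
`(a₁ + a₃) / 2 + √(a₀² + (a₁ + a₃)² / 4)` of the right-hand side.
-/

open Matrix
open scoped Matrix.Norms.L2Operator

section

variable {𝕜 : Type*} [RCLike 𝕜]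

lemma norm_sq_toEuclideanCLM_lowerTriangular (a b d : 𝕜) (x : EuclideanSpace 𝕜 (Fin 2)) :
    ‖toEuclideanCLM (𝕜 := 𝕜) !![a, 0; b, d] x‖ ^ 2 = ‖a * x 0‖ ^ 2 + ‖b * x 0 + d * x 1‖ ^ 2 := by
  simp [EuclideanSpace.norm_sq_eq, Fin.sum_univ_two, mulVec, dotProduct]

lemma norm_toEuclideanCLM_lowerTriangular_le {a b d : 𝕜} {K : ℝ} (hK : 0 ≤ K)
    (H : ∀ u v : ℝ, 0 ≤ u → 0 ≤ v →
      ‖a‖ ^ 2 * u ^ 2 + (‖b‖ * u + ‖d‖ * v) ^ 2 ≤ K ^ 2 * (u ^ 2 + v ^ 2)) :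
    ‖toEuclideanCLM (𝕜 := 𝕜) !![a, 0; b, d]‖ ≤ K := by
  refine ContinuousLinearMap.opNorm_le_bound _ hK fun x ↦ ?_
  refine (sq_le_sq₀ (norm_nonneg _) (by positivity)).mp ?_
  have hrow : ‖b * x 0 + d * x 1‖ ≤ ‖b‖ * ‖x 0‖ + ‖d‖ * ‖x 1‖ :=
    (norm_add_le _ _).trans_eq (by rw [norm_mul, norm_mul])
  calc ‖toEuclideanCLM (𝕜 := 𝕜) !![a, 0; b, d] x‖ ^ 2
      = ‖a‖ ^ 2 * ‖x 0‖ ^ 2 + ‖b * x 0 + d * x 1‖ ^ 2 := by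
        rw [norm_sq_toEuclideanCLM_lowerTriangular, norm_mul, mul_pow]
    _ ≤ ‖a‖ ^ 2 * ‖x 0‖ ^ 2 + (‖b‖ * ‖x 0‖ + ‖d‖ * ‖x 1‖) ^ 2 := by gcongr
    _ ≤ K ^ 2 * (‖x 0‖ ^ 2 + ‖x 1‖ ^ 2) := H _ _ (norm_nonneg _) (norm_nonneg _)
    _ = (K * ‖x‖) ^ 2 := by rw [mul_pow, EuclideanSpace.norm_sq_eq, Fin.sum_univ_two]

lemma norm_toEuclideanCLM_toeplitz_le (a : ℝ) {b : ℝ} (hb : 0 ≤ b) :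
    ‖toEuclideanCLM (𝕜 := 𝕜) !![(a : 𝕜), 0; (b : 𝕜), (a : 𝕜)]‖ ≤
      b / 2 + √(a ^ 2 + b ^ 2 / 4) := by
  set s := √(a ^ 2 + b ^ 2 / 4)
  have hs : s ^ 2 = a ^ 2 + b ^ 2 / 4 := Real.sq_sqrt (by positivity)
  refine norm_toEuclideanCLM_lowerTriangular_le (by positivity) fun u v _ _ ↦ ?_
  simp only [RCLike.norm_ofReal, abs_of_nonneg hb, sq_abs]
  -- Cauchy–Schwarz for the vectors `(b / 2, |a|)` and `(u² - v², 2uv)`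
  have hCS : b / 2 * (u ^ 2 - v ^ 2) + |a| * (2 * u * v) ≤ s * (u ^ 2 + v ^ 2) := by
    have hsq : (b / 2 * (u ^ 2 - v ^ 2) + |a| * (2 * u * v)) ^ 2 ≤ (s * (u ^ 2 + v ^ 2)) ^ 2 := by
      rw [mul_pow, hs, ← sq_abs a]
      nlinarith [sq_nonneg (b / 2 * (2 * u * v) - |a| * (u ^ 2 - v ^ 2))]
    exact le_of_sq_le_sq hsq (by positivity)
  nlinarith [mul_le_mul_of_nonneg_left hCS hb, sq_abs a]

lemma le_norm_toEuclideanCLM_toeplitz (a : ℝ) {b : ℝ} (hb : 0 ≤ b) :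
    b / 2 + √(a ^ 2 + b ^ 2 / 4) ≤
      ‖toEuclideanCLM (𝕜 := 𝕜) !![(a : 𝕜), 0; (b : 𝕜), (a : 𝕜)]‖ := by
  set p := b / 2 + √(a ^ 2 + b ^ 2 / 4)
  have hp : 0 ≤ p := by positivity
  have hp_sq : p ^ 2 = b * p + a ^ 2 := by
    have := Real.sq_sqrt (show 0 ≤ a ^ 2 + b ^ 2 / 4 by positivity)
    simp only [p]; nlinarith
  -- `T (p, a) = (a p, p ^ 2)`, whose norm is `p` times that of `(p, a)`
  set x : EuclideanSpace 𝕜 (Fin 2) := WithLp.toLp 2 ![(p : 𝕜), (a : 𝕜)]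
  have hx : ‖x‖ ^ 2 = p ^ 2 + a ^ 2 := by
    simp [x, EuclideanSpace.norm_sq_eq, Fin.sum_univ_two, sq_abs]
  have hTx : ‖toEuclideanCLM (𝕜 := 𝕜) !![(a : 𝕜), 0; (b : 𝕜), (a : 𝕜)] x‖ = p * ‖x‖ := by
    refine (sq_eq_sq₀ (norm_nonneg _) (by positivity)).mp ?_
    rw [norm_sq_toEuclideanCLM_lowerTriangular, mul_pow, hx]
    have : (b : 𝕜) * p + a * a = ((p ^ 2 : ℝ) : 𝕜) := by rw [hp_sq]; push_cast; ring
    simp only [x, Matrix.cons_val_zero, Matrix.cons_val_one, this, norm_mul,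
      RCLike.norm_ofReal, abs_of_nonneg hp, abs_of_nonneg (sq_nonneg p), mul_pow, sq_abs]
    ring
  rcases hp.eq_or_lt with hp0 | hp_pos
  · rw [← hp0]; exact norm_nonneg _
  have hx_pos : 0 < ‖x‖ := by nlinarith [norm_nonneg x]
  have := (toEuclideanCLM (𝕜 := 𝕜) !![(a : 𝕜), 0; (b : 𝕜), (a : 𝕜)]).le_opNorm x
  exact le_of_mul_le_mul_right (hTx ▸ this) hx_pos

theorem norm_toEuclideanCLM_toeplitz (a : ℝ) {b : ℝ} (hb : 0 ≤ b) :
    ‖toEuclideanCLM (𝕜 := 𝕜) !![(a : 𝕜), 0; (b : 𝕜), (a : 𝕜)]‖ =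
      b / 2 + √(a ^ 2 + b ^ 2 / 4) :=
  (norm_toEuclideanCLM_toeplitz_le a hb).antisymm (le_norm_toEuclideanCLM_toeplitz a hb)

end

theorem opNorm_le_case_a0_le_a1_general (a₀ a₁ a₃ : ℝ)
    (h₁ : 0 ≤ a₁) (h₃ : 0 ≤ a₃) :
    ‖Matrix.toEuclideanCLM (𝕜 := ℂ)
        (!![(a₀ : ℂ), 0; (a₃ : ℂ), (a₀ : ℂ) + (a₁ : ℂ) / 4])‖ ≤
      ‖Matrix.toEuclideanCLM (𝕜 := ℂ)
        (!![(a₀ : ℂ), 0; (a₁ : ℂ) + (a₃ : ℂ), (a₀ : ℂ)])‖ := by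
  have hsplit : !![(a₀ : ℂ), 0; (a₃ : ℂ), (a₀ : ℂ) + (a₁ : ℂ) / 4] =
      !![(a₀ : ℂ), 0; (a₃ : ℂ), (a₀ : ℂ)] + diagonal ![0, (a₁ : ℂ) / 4] := by
    ext i j; fin_cases i <;> fin_cases j <;> simp
  have hdiag : ‖toEuclideanCLM (𝕜 := ℂ) (diagonal ![0, (a₁ : ℂ) / 4])‖ ≤ a₁ / 4 := by
    rw [l2_opNorm_toEuclideanCLM, l2_opNorm_diagonal]
    refine (pi_norm_le_iff_of_nonneg (by linarith)).2 fun i ↦ ?_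
    fin_cases i <;> simp [abs_of_nonneg h₁, div_nonneg h₁]
  have hA : ‖toEuclideanCLM (𝕜 := ℂ) !![(a₀ : ℂ), 0; (a₃ : ℂ), (a₀ : ℂ)]‖ =
      a₃ / 2 + √(a₀ ^ 2 + a₃ ^ 2 / 4) := norm_toEuclideanCLM_toeplitz a₀ h₃
  have hB : ‖toEuclideanCLM (𝕜 := ℂ) !![(a₀ : ℂ), 0; (a₁ : ℂ) + (a₃ : ℂ), (a₀ : ℂ)]‖ =
      (a₁ + a₃) / 2 + √(a₀ ^ 2 + (a₁ + a₃) ^ 2 / 4) := by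
    rw [← Complex.ofReal_add]; exact norm_toEuclideanCLM_toeplitz a₀ (add_nonneg h₁ h₃)
  have hsqrt : √(a₀ ^ 2 + a₃ ^ 2 / 4) ≤ √(a₀ ^ 2 + (a₁ + a₃) ^ 2 / 4) := by gcongr; linarith
  calc _ ≤ ‖toEuclideanCLM (𝕜 := ℂ) !![(a₀ : ℂ), 0; (a₃ : ℂ), (a₀ : ℂ)]‖ + a₁ / 4 := by
        rw [hsplit, map_add]; exact (norm_add_le _ _).trans (by gcongr)
    _ ≤ _ := by rw [hA, hB]; linarith

/-- For nonnegative reals `a₀ ≤ a₁` and `a₃ ≥ 0`, the operator norm (as an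
operator on Euclidean `ℂ²`) of `[[a₀, 0], [a₃, a₀ + a₁/4]]` is at most that of
`[[a₀, 0], [a₁ + a₃, a₀]]`. -/
theorem opNorm_le_case_a0_le_a1 (a₀ a₁ a₃ : ℝ)
    (h₀ : 0 ≤ a₀) (h₁ : 0 ≤ a₁) (h₃ : 0 ≤ a₃) (h : a₀ ≤ a₁) :
    ‖Matrix.toEuclideanCLM (𝕜 := ℂ)
        (!![(a₀ : ℂ), 0; (a₃ : ℂ), (a₀ : ℂ) + (a₁ : ℂ) / 4])‖ ≤
      ‖Matrix.toEuclideanCLM (𝕜 := ℂ)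
        (!![(a₀ : ℂ), 0; (a₁ : ℂ) + (a₃ : ℂ), (a₀ : ℂ)])‖ :=
  opNorm_le_case_a0_le_a1_general a₀ a₁ a₃ h₁ h₃
end

section
/- Let R be a commutative unital star-ring and let u₁,…,uₙ ∈ R (n ≥ 2) be unitary elements, i.e. star(u_j)·u_j = 1 = u_j·star(u_j) for each j. Set p = u₁u₂⋯uₙ and c_k = e_k(u₁,…,u_{n-1}), the k-th elementary symmetric polynomial evaluated at u₁,…,u_{n-1}. Then for every i = 1,…,n−1, eᵢ(u₁,…,uₙ) = cᵢ + star(c_{n-i})·p. -/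
/-!
Splitting off `uₙ`, Pascal's rule gives `eᵢ(u₁, …, uₙ) = cᵢ + c_{i-1} uₙ`, so it remains to see
`c_{i-1} = star (c_{n-i}) · u₁ ⋯ u_{n-1}`. Complementation in `{1, …, n-1}` matches the
`(n-i)`-subsets with the `(i-1)`-subsets, and for unitaries `star (∏_{t} u) · ∏ u = ∏_{tᶜ} u`.
-/

open Finset

def esymR {R : Type*} [CommRing R] (n k : ℕ) (u : Fin n → R) : R :=
  ∑ t ∈ Finset.powersetCard k (Finset.univ : Finset (Fin n)), ∏ j ∈ t, u j

theorem Multiset.esymm_cons_succ {R : Type*} [CommSemiring R] (a : R) (s : Multiset R) (k : ℕ) :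
    (a ::ₘ s).esymm (k + 1) = s.esymm (k + 1) + a * s.esymm k := by
  simp only [esymm, powersetCard_cons, map_add, sum_add, map_map, Function.comp_def, prod_cons,
    sum_map_mul_left]

theorem Fin.univ_val_map_succ {α : Type*} {m : ℕ} (u : Fin (m + 1) → α) :
    univ.val.map u = u (Fin.last m) ::ₘ univ.val.map (fun j : Fin m => u j.castSucc) := by
  rw [Fin.univ_val_map, Fin.univ_val_map, List.ofFn_succ', List.concat_eq_append,
    Multiset.cons_coe]
  exact Multiset.coe_eq_coe.2 (List.perm_append_singleton _ _)

theorem Finset.sdiff_mem_powersetCard {ι : Type*} [DecidableEq ι] {s t : Finset ι} {k : ℕ}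
    (ht : t ∈ powersetCard k s) : s \ t ∈ powersetCard (#s - k) s := by
  rw [mem_powersetCard] at ht ⊢
  exact ⟨sdiff_subset, by rw [card_sdiff_of_subset ht.1, ht.2]⟩

theorem Finset.star_prod_mul_prod_of_subset {ι R : Type*} [CommMonoid R] [StarMul R]
    [DecidableEq ι] {s t : Finset ι} (h : t ⊆ s) (f : ι → R)
    (hf : ∀ i ∈ t, star (f i) * f i = 1) :
    star (∏ i ∈ t, f i) * ∏ i ∈ s, f i = ∏ i ∈ s \ t, f i := by
  rw [← prod_sdiff h, star_prod, mul_left_comm, ← prod_mul_distrib, prod_eq_one hf, mul_one]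

theorem Finset.star_sum_powersetCard_mul_prod {ι R : Type*} [CommSemiring R] [StarRing R]
    {s : Finset ι} {k : ℕ} (hk : k ≤ #s) (f : ι → R) (hf : ∀ i ∈ s, star (f i) * f i = 1) :
    star (∑ t ∈ powersetCard (#s - k) s, ∏ i ∈ t, f i) * ∏ i ∈ s, f i =
      ∑ t ∈ powersetCard k s, ∏ i ∈ t, f i := by
  classical
  rw [star_sum, sum_mul]
  refine sum_nbij' (s \ ·) (s \ ·) (fun t ht => ?_) (fun t ht => ?_) (fun t ht => ?_)
    (fun t ht => ?_) (fun t ht => ?_)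
  · simpa [Nat.sub_sub_self hk] using sdiff_mem_powersetCard ht
  · exact sdiff_mem_powersetCard ht
  · exact sdiff_sdiff_eq_self (mem_powersetCard.1 ht).1
  · exact sdiff_sdiff_eq_self (mem_powersetCard.1 ht).1
  · have hts := (mem_powersetCard.1 ht).1
    exact star_prod_mul_prod_of_subset hts f fun i hi => hf i (hts hi)

section esymR

variable {R : Type*} [CommRing R]

theorem esymR_eq_esymm (n k : ℕ) (u : Fin n → R) : esymR n k u = (univ.val.map u).esymm k :=
  (esymm_map_val u univ k).symm

theorem esymR_succ_succ (m k : ℕ) (u : Fin (m + 1) → R) :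
    esymR (m + 1) (k + 1) u =
      esymR m (k + 1) (fun j => u j.castSucc) +
        esymR m k (fun j => u j.castSucc) * u (Fin.last m) := by
  simp only [esymR_eq_esymm, Fin.univ_val_map_succ, Multiset.esymm_cons_succ, mul_comm]

theorem star_esymR_mul_prod [StarRing R] {n k : ℕ} (hk : k ≤ n) (u : Fin n → R)
    (hu : ∀ j, star (u j) * u j = 1) :
    star (esymR n (n - k) u) * ∏ j, u j = esymR n k u := by
  have := star_sum_powersetCard_mul_prod (s := univ) (by simpa using hk) u fun j _ => hu j
  rwa [card_univ, Fintype.card_fin] at this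

end esymR

theorem esym_unitaries_eq_general (R : Type*) [CommRing R] [StarRing R]
    (m : ℕ) (u : Fin (m + 1) → R)
    (hu : ∀ j, star (u j) * u j = 1 ∧ u j * star (u j) = 1) :
    ∀ i : Fin m,
      esymR (m + 1) (i.1 + 1) u =
        esymR m (i.1 + 1) (fun j => u j.castSucc) +
          star (esymR m (m - i.1) (fun j => u j.castSucc)) * ∏ j, u j := by
  intro i
  rw [esymR_succ_succ, Fin.prod_univ_castSucc, ← mul_assoc,
    star_esymR_mul_prod i.2.le _ fun j => (hu j.castSucc).1]

/-- Let `R` be a commutative unital star-ring and let `u₁, …, uₙ` (`n = m + 1`,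
`n ≥ 2`) be unitary elements of `R`.  With `p = u₁ ⋯ uₙ` and
`c_k = e_k(u₁, …, u_{n-1})`, one has
`eᵢ(u₁, …, uₙ) = cᵢ + star (c_{n-i}) * p` for every `i = 1, …, n - 1`
(here `i : Fin m` encodes the index `i + 1`, so `n - (i+1) = m - i`). -/
theorem esym_unitaries_eq (R : Type*) [CommRing R] [StarRing R]
    (m : ℕ) (hm : 1 ≤ m) (u : Fin (m + 1) → R)
    (hu : ∀ j, star (u j) * u j = 1 ∧ u j * star (u j) = 1) :
    ∀ i : Fin m,
      esymR (m + 1) (i.1 + 1) u =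
        esymR m (i.1 + 1) (fun j => u j.castSucc) +
          star (esymR m (m - i.1) (fun j => u j.castSucc)) * ∏ j, u j :=
  esym_unitaries_eq_general R m u hu
end
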